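/- Let G be a finite group, A a normal subgroup of G such that G/A is cyclic. Then the number of subgroups of order p generated by elements of prime order p ≥ 5 lying in G \ A is at most ⌊log_5(|G/A|)⌋ · |A|. -/

import Mathlib

/-!
If `x ∉ A` has prime order `p`, its image in `G ⧸ A` still has order `p`, so `p ∣ |G ⧸ A|`, and
since `G ⧸ A` is cyclic, `⟨xA⟩` is its unique subgroup of order `p`. Fixing once and for all a
lift `c p ∈ G` of an element of order `p` of `G ⧸ A`, some power of `x` has the form `c p * a`
with `a ∈ A`, and being nontrivial it generates `⟨x⟩`. So `⟨x⟩` is determined by the pair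
`(p, a)`; and a product of `k` distinct primes `p ≥ 5` dividing `|G ⧸ A|` is at least `5 ^ k`,
so at most `log₅ |G ⧸ A|` such primes occur.
-/

open Subgroup

theorem Nat.card_filter_primeFactors_le_log {b : ℕ} (hb : 1 < b) (n : ℕ) :
    {p ∈ n.primeFactors | b ≤ p}.card ≤ Nat.log b n := by
  rcases eq_or_ne n 0 with rfl | hn
  · simp
  refine (Nat.le_log_iff_pow_le hb hn).2 ?_
  calc b ^ {p ∈ n.primeFactors | b ≤ p}.card
      ≤ ∏ p ∈ n.primeFactors with b ≤ p, p :=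
        Finset.pow_card_le_prod _ _ _ fun p hp => (Finset.mem_filter.1 hp).2
    _ ≤ ∏ p ∈ n.primeFactors, p :=
        Finset.prod_le_prod_of_subset_of_one_le' (Finset.filter_subset _ _)
          fun p hp _ => (Nat.prime_of_mem_primeFactors hp).one_le
    _ ≤ n := Nat.le_of_dvd (Nat.pos_of_ne_zero hn) (Nat.prod_primeFactors_dvd n)

section

variable {G : Type*} [Group G]

theorem IsCyclic.coe_zpowers_eq_setOf_pow_orderOf_eq_one [Finite G] [IsCyclic G] (x : G) :
    (zpowers x : Set G) = {z | z ^ orderOf x = 1} := by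
  classical
  have := Fintype.ofFinite G
  refine Set.eq_of_subset_of_ncard_le (fun z hz => ?_) ?_ (Set.toFinite _)
  · exact orderOf_dvd_iff_pow_eq_one.1 (orderOf_dvd_of_mem_zpowers hz)
  · calc {z : G | z ^ orderOf x = 1}.ncard
        = (Finset.univ.filter fun z : G => z ^ orderOf x = 1).card := by
          rw [← Set.ncard_coe_finset]; simp
      _ ≤ orderOf x := IsCyclic.card_pow_eq_one_le (orderOf_pos x)
      _ = (zpowers x : Set G).ncard := by
          rw [← Nat.card_coe_set_eq, SetLike.coe_sort_coe, Nat.card_zpowers]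

theorem IsCyclic.zpowers_eq_zpowers_of_orderOf_eq [Finite G] [IsCyclic G] {x y : G}
    (h : orderOf x = orderOf y) : zpowers x = zpowers y :=
  SetLike.coe_injective <| by
    rw [coe_zpowers_eq_setOf_pow_orderOf_eq_one, coe_zpowers_eq_setOf_pow_orderOf_eq_one, h]

theorem zpowers_eq_zpowers_of_mem_of_ne_one {x y : G} (hx : (orderOf x).Prime)
    (hy : y ∈ zpowers x) (hy1 : y ≠ 1) : zpowers y = zpowers x := by
  have : Finite (zpowers x) := Nat.finite_of_card_ne_zero (by simpa using hx.ne_zero)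
  refine eq_of_le_of_card_ge (zpowers_le.2 hy) ?_
  rw [Nat.card_zpowers, Nat.card_zpowers]
  exact ((hx.eq_one_or_self_of_dvd _ (orderOf_dvd_of_mem_zpowers hy)).resolve_left
    (by simpa using hy1)).ge

variable {N : Subgroup G} [N.Normal]

theorem QuotientGroup.orderOf_mk_eq_of_prime {x : G} (hx : (orderOf x).Prime) (hxN : x ∉ N) :
    orderOf (x : G ⧸ N) = orderOf x :=
  (hx.eq_one_or_self_of_dvd _ (orderOf_map_dvd (QuotientGroup.mk' N) x)).resolve_left
    (by simpa [QuotientGroup.eq_one_iff] using hxN)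

theorem exists_mem_zpowers_eq_zpowers_mul [Finite (G ⧸ N)] [IsCyclic (G ⧸ N)] {x c : G}
    (hx : (orderOf x).Prime) (hxN : x ∉ N) (hc : orderOf (c : G ⧸ N) = orderOf x) :
    ∃ a ∈ N, zpowers x = zpowers (c * a) := by
  have hcx : (c : G ⧸ N) ∈ (zpowers x).map (QuotientGroup.mk' N) := by
    rw [MonoidHom.map_zpowers, QuotientGroup.mk'_apply, IsCyclic.zpowers_eq_zpowers_of_orderOf_eq
      ((QuotientGroup.orderOf_mk_eq_of_prime hx hxN).trans hc.symm)]
    exact mem_zpowers _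
  obtain ⟨z, hz, hzc⟩ := mem_map.1 hcx
  have hz1 : z ≠ 1 := by
    rintro rfl
    rw [← hzc, map_one, orderOf_one] at hc
    exact hx.one_lt.ne hc
  refine ⟨c⁻¹ * z, QuotientGroup.eq.1 hzc.symm, ?_⟩
  rw [mul_inv_cancel_left, zpowers_eq_zpowers_of_mem_of_ne_one hx hz hz1]

end

/-- Lemma 2.6: if `A ⊴ G` with `G/A` cyclic, the number of subgroups `⟨x⟩`
generated by elements `x ∈ G \ A` of prime order `p ≥ 5` is at most
`⌊log_5 |G/A|⌋ · |A|`. -/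
theorem stmt_0 {G : Type*} [Group G] [Fintype G] (A : Subgroup G) [A.Normal]
    (hcyc : IsCyclic (G ⧸ A)) :
    Nat.card {H : Subgroup G //
        ∃ x : G, x ∉ A ∧ (∃ p : ℕ, p.Prime ∧ 5 ≤ p ∧ orderOf x = p) ∧
          H = Subgroup.zpowers x} ≤
      Nat.log 5 (Nat.card (G ⧸ A)) * Nat.card A := by
  classical
  set n := Nat.card (G ⧸ A)
  set P := {p ∈ n.primeFactors | 5 ≤ p}
  have hlift : ∀ p ∈ P, ∃ c : G, orderOf (c : G ⧸ A) = p := fun p hp => by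
    obtain ⟨hp, hpn, -⟩ := Nat.mem_primeFactors.1 (Finset.mem_filter.1 hp).1
    have := Fact.mk hp
    obtain ⟨q, hq⟩ := exists_prime_orderOf_dvd_card' p hpn
    exact ⟨q.out, by rwa [QuotientGroup.out_eq']⟩
  choose! c hc using hlift
  have hsub : {H : Subgroup G | ∃ x : G, x ∉ A ∧ (∃ p : ℕ, p.Prime ∧ 5 ≤ p ∧ orderOf x = p) ∧
      H = zpowers x} ⊆ (fun pa : ℕ × G => zpowers (c pa.1 * pa.2)) '' ((P : Set ℕ) ×ˢ A) := by
    rintro _ ⟨x, hxA, ⟨p, hp, h5, rfl⟩, rfl⟩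
    have hpn : orderOf x ∣ n :=
      QuotientGroup.orderOf_mk_eq_of_prime hp hxA ▸ orderOf_dvd_natCard _
    have hpP : orderOf x ∈ P :=
      Finset.mem_filter.2 ⟨Nat.mem_primeFactors.2 ⟨hp, hpn, Nat.card_pos.ne'⟩, h5⟩
    obtain ⟨a, ha, h⟩ := exists_mem_zpowers_eq_zpowers_mul hp hxA (hc _ hpP)
    exact ⟨(orderOf x, a), ⟨hpP, ha⟩, h.symm⟩
  calc _ ≤ _ := Set.ncard_le_ncard hsub (Set.toFinite _)
    _ ≤ ((P : Set ℕ) ×ˢ (A : Set G)).ncard := Set.ncard_image_le (Set.toFinite _)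
    _ = P.card * Nat.card A := by
      rw [Set.ncard_prod, Set.ncard_coe_finset, ← Nat.card_coe_set_eq]
      rfl
    _ ≤ _ := Nat.mul_le_mul_right _ (Nat.card_filter_primeFactors_le_log (by norm_num) n)
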